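/- If ε_n(x) = ε_n(y) for all n < 2m−1 and ε_{2m−1}(x) > ε_{2m−1}(y), then x ≤ y, where x, y are the sums of the corresponding alternating Cantor series. -/

import Mathlib

open Finset

/-- Product d_1 d_2 ... d_n. -/
noncomputable def P (d : ℕ → ℕ) (n : ℕ) : ℝ := ∏ i ∈ Finset.Icc 1 n, (d i : ℝ)

/-- The alternating Cantor series sum ∑_{n≥1} (-1)^n ε_n/(d_1...d_n). -/
noncomputable def negaSum (d ε : ℕ → ℕ) : ℝ :=
  ∑' n : ℕ, (-1 : ℝ) ^ (n + 1) * (ε (n + 1) : ℝ) / P d (n + 1)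

/-- a₀ = ∑_{n≥1} (-1)^{n+1}/(d_1...d_n). -/
noncomputable def a0 (d : ℕ → ℕ) : ℝ := ∑' n : ℕ, (-1 : ℝ) ^ n / P d (n + 1)

/-!
Digits differ by at most `d n - 1`, and
`(d n - 1) / (d_1 ⋯ d_n) = 1 / (d_1 ⋯ d_{n-1}) - 1 / (d_1 ⋯ d_n)`,
so the tail of `x - y` after the first differing position `k` telescopes to at most
`1 / (d_1 ⋯ d_k)` in absolute value. At an odd position `k` the leading term of `x - y` is
`-(ε_k - η_k) / (d_1 ⋯ d_k) ≤ -1 / (d_1 ⋯ d_k)`, which the tail cannot compensate.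
-/

lemma summable_and_tsum_sub_succ_le_of_antitone {g : ℕ → ℝ} (hg : Antitone g)
    (hg0 : ∀ n, 0 ≤ g n) :
    Summable (fun n => g n - g (n + 1)) ∧ ∑' n, (g n - g (n + 1)) ≤ g 0 := by
  have hnonneg : ∀ n, 0 ≤ g n - g (n + 1) := fun n => sub_nonneg.mpr (hg n.le_succ)
  have hpartial : ∀ n, ∑ i ∈ range n, (g i - g (i + 1)) ≤ g 0 := fun n => by
    rw [sum_range_sub']
    linarith [hg0 n]
  exact ⟨summable_of_sum_range_le hnonneg hpartial, Real.tsum_le_of_sum_range_le hnonneg hpartial⟩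

lemma P_succ (d : ℕ → ℕ) (n : ℕ) : P d (n + 1) = P d n * d (n + 1) := by
  simp [P, prod_Icc_succ_top (Nat.le_add_left 1 n)]

/-- The summand of `negaSum` with real coefficients, so that differences of digit sequences can
be summed. -/
noncomputable def altTerm (d : ℕ → ℕ) (c : ℕ → ℝ) (n : ℕ) : ℝ :=
  (-1 : ℝ) ^ (n + 1) * c (n + 1) / P d (n + 1)

lemma negaSum_eq_tsum_altTerm (d ε : ℕ → ℕ) : negaSum d ε = ∑' n, altTerm d (fun n => ε n) n :=
  rfl

lemma altTerm_sub (d : ℕ → ℕ) (c c' : ℕ → ℝ) (n : ℕ) :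
    altTerm d (c - c') n = altTerm d c n - altTerm d c' n := by
  simp only [altTerm, Pi.sub_apply]
  ring

section PositiveBases

variable {d : ℕ → ℕ} (hd : ∀ n, 1 ≤ n → 0 < d n)
include hd

lemma P_pos (n : ℕ) : 0 < P d n :=
  prod_pos fun i hi => Nat.cast_pos.mpr (hd i (mem_Icc.mp hi).1)

lemma one_div_P_antitone (k : ℕ) : Antitone fun i => 1 / P d (i + k) := by
  refine antitone_nat_of_succ_le fun i => one_div_le_one_div_of_le (P_pos hd _) ?_
  rw [add_right_comm, P_succ]
  exact le_mul_of_one_le_right (P_pos hd _).le (by exact_mod_cast hd _ (Nat.le_add_left 1 _))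

lemma sub_one_div_P_succ (n : ℕ) :
    ((d (n + 1) : ℝ) - 1) / P d (n + 1) = 1 / P d n - 1 / P d (n + 1) := by
  have hP := (P_pos hd n).ne'
  have hdn : (d (n + 1) : ℝ) ≠ 0 := by exact_mod_cast (hd (n + 1) (Nat.le_add_left 1 n)).ne'
  rw [P_succ]
  field_simp

variable {c : ℕ → ℝ} (hc : ∀ n, 1 ≤ n → |c n| ≤ d n - 1)
include hc

lemma abs_altTerm_le (n : ℕ) : |altTerm d c n| ≤ 1 / P d n - 1 / P d (n + 1) := by
  have hP := P_pos hd (n + 1)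
  rw [← sub_one_div_P_succ hd, altTerm, abs_div, abs_mul, abs_pow, abs_neg, abs_one, one_pow,
    one_mul, abs_of_pos hP]
  exact div_le_div_of_nonneg_right (hc (n + 1) (Nat.le_add_left 1 n)) hP.le

lemma altTerm_le_of_nat_add (k i : ℕ) :
    altTerm d c (i + k) ≤ 1 / P d (i + k) - 1 / P d (i + 1 + k) := by
  rw [add_right_comm]
  exact (le_abs_self _).trans (abs_altTerm_le hd hc _)

lemma summable_altTerm : Summable (altTerm d c) := by
  refine Summable.of_norm_bounded (summable_and_tsum_sub_succ_le_of_antitone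
    (one_div_P_antitone hd 0) fun n => (one_div_pos.mpr (P_pos hd _)).le).1 fun n => ?_
  simpa only [Real.norm_eq_abs, add_zero] using abs_altTerm_le hd hc n

lemma tsum_altTerm_nat_add_le (k : ℕ) : ∑' i, altTerm d c (i + k) ≤ 1 / P d k := by
  obtain ⟨hsum, hle⟩ := summable_and_tsum_sub_succ_le_of_antitone (one_div_P_antitone hd k)
    fun n => (one_div_pos.mpr (P_pos hd _)).le
  calc ∑' i, altTerm d c (i + k)
      ≤ ∑' i, (1 / P d (i + k) - 1 / P d (i + 1 + k)) :=
        ((summable_nat_add_iff k).mpr (summable_altTerm hd hc)).tsum_le_tsum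
          (altTerm_le_of_nat_add hd hc k) hsum
    _ ≤ 1 / P d k := by simpa using hle

theorem tsum_altTerm_nonpos (j : ℕ) (hzero : ∀ n < 2 * j, c (n + 1) = 0)
    (hlead : 1 ≤ c (2 * j + 1)) : ∑' n, altTerm d c n ≤ 0 := by
  have hP := P_pos hd (2 * j + 1)
  have hhead : ∑ i ∈ range (2 * j + 1), altTerm d c i = -(c (2 * j + 1) / P d (2 * j + 1)) := by
    rw [sum_range_succ, sum_eq_zero fun i hi => by simp [altTerm, hzero i (mem_range.mp hi)],
      zero_add, altTerm, (even_two_mul j).add_one.neg_one_pow]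
    ring
  have hlead' : 1 / P d (2 * j + 1) ≤ c (2 * j + 1) / P d (2 * j + 1) :=
    div_le_div_of_nonneg_right hlead hP.le
  rw [← (summable_altTerm hd hc).sum_add_tsum_nat_add (2 * j + 1), hhead]
  linarith [tsum_altTerm_nat_add_le hd hc (2 * j + 1)]

end PositiveBases

lemma abs_natCast_sub_le_of_digits {D a b : ℕ} (hD : 0 < D) (ha : a ≤ D - 1) (hb : b ≤ D - 1) :
    |(a : ℝ) - b| ≤ D - 1 := by
  have ha' : (a : ℝ) + 1 ≤ D := by exact_mod_cast (show a + 1 ≤ D by omega)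
  have hb' : (b : ℝ) + 1 ≤ D := by exact_mod_cast (show b + 1 ≤ D by omega)
  rw [abs_sub_le_iff]
  constructor <;> linarith [(a.cast_nonneg : (0 : ℝ) ≤ a), (b.cast_nonneg : (0 : ℝ) ≤ b)]

theorem alternating_cantor_le_of_odd_digit_gt (d ε η : ℕ → ℕ) (m : ℕ)
    (hm : 1 ≤ m) (hd : ∀ n, 1 ≤ n → 2 ≤ d n)
    (hε : ∀ n, 1 ≤ n → ε n ≤ d n - 1) (hη : ∀ n, 1 ≤ n → η n ≤ d n - 1)
    (hagree : ∀ n, n < 2 * m - 1 → ε n = η n)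
    (hgt : ε (2 * m - 1) > η (2 * m - 1)) :
    negaSum d ε ≤ negaSum d η := by
  have hd' : ∀ n, 1 ≤ n → 0 < d n := fun n hn => (hd n hn).trans_lt' two_pos
  have hdigit : ∀ (δ : ℕ → ℕ), (∀ n, 1 ≤ n → δ n ≤ d n - 1) →
      ∀ n, 1 ≤ n → |(δ n : ℝ)| ≤ d n - 1 := fun δ hδ n hn => by
    simpa using abs_natCast_sub_le_of_digits (hd' n hn) (hδ n hn) (Nat.zero_le _)
  have hdiff : ∀ n, 1 ≤ n → |(ε n : ℝ) - η n| ≤ d n - 1 := fun n hn =>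
    abs_natCast_sub_le_of_digits (hd' n hn) (hε n hn) (hη n hn)
  obtain ⟨j, rfl⟩ : ∃ j, m = j + 1 := ⟨m - 1, by omega⟩
  have hodd : 2 * (j + 1) - 1 = 2 * j + 1 := by omega
  rw [hodd] at hgt
  have hlead : (1 : ℝ) ≤ ε (2 * j + 1) - η (2 * j + 1) := by
    have : (η (2 * j + 1) : ℝ) + 1 ≤ ε (2 * j + 1) := by exact_mod_cast hgt
    linarith
  have hsε := summable_altTerm hd' (c := fun n => (ε n : ℝ)) (hdigit ε hε)
  have hsη := summable_altTerm hd' (c := fun n => (η n : ℝ)) (hdigit η hη)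
  rw [← sub_nonpos, negaSum_eq_tsum_altTerm, negaSum_eq_tsum_altTerm, ← hsε.tsum_sub hsη,
    tsum_congr fun n => (altTerm_sub d _ _ n).symm]
  exact tsum_altTerm_nonpos hd' hdiff j (fun n hn => by simp [hagree (n + 1) (by omega)]) hlead
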